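/- Let A be a unital complex C*-algebra, let Δ : A → A be a weak-2-local derivation on A, and let p be a projection in A (p = p* = p²). Then pΔ(p)p = 0 and (1 − p)Δ(p)(1 − p) = 0. -/
import Mathlib


variable {A : Type*} [CStarAlgebra A]

/-- A (not necessarily linear) map `Δ` on a complex C*-algebra `A` is a weak-2-local derivation
if for all `a b ∈ A` and every continuous linear functional `φ` on `A` there is a derivation
`D` on `A` (a `ℂ`-linear map satisfying the Leibniz rule) such that `φ (Δ a) = φ (D a)` and
`φ (Δ b) = φ (D b)`. -/
def IsWeak2LocalDerivation (Δ : A → A) : Prop :=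
  ∀ (a b : A) (φ : A →L[ℂ] ℂ),
    ∃ D : A →ₗ[ℂ] A,
      (∀ x y, D (x * y) = D x * y + x * D y) ∧
      φ (Δ a) = φ (D a) ∧ φ (Δ b) = φ (D b)

/-- Key algebraic fact: if `d = d*p + p*d` (Leibniz at an idempotent), then the two corner
sandwiches vanish. -/
lemma sandwich_aux {d p : A} (hp : p * p = p) (hd : d = d * p + p * d) :
    p * d * p = 0 ∧ (1 - p) * d * (1 - p) = 0 := by
  have h1 : p * d * p = p * d * p + p * d * p := by
    calc p * d * p = p * (d * p + p * d) * p := by rw [← hd]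
      _ = p * d * (p * p) + (p * p) * d * p := by noncomm_ring
      _ = p * d * p + p * d * p := by rw [hp]
  have hpdp : p * d * p = 0 := by
    have := sub_eq_zero_of_eq h1.symm
    simpa using this
  refine ⟨hpdp, ?_⟩
  have h2 : (1 - p) * d * (1 - p) = d - d * p - p * d + p * d * p := by noncomm_ring
  rw [h2, hpdp, add_zero]
  nth_rw 1 [hd]
  abel

/-- For a weak-2-local derivation `Δ` on a unital C*-algebra and a projection `p`,
`pΔ(p)p = 0` and `(1-p)Δ(p)(1-p) = 0`. -/
theorem weak2LocalDerivation_proj_sandwich (Δ : A → A) (hΔ : IsWeak2LocalDerivation Δ)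
    (p : A) (hp_star : star p = p) (hp_idem : p * p = p) :
    p * Δ p * p = 0 ∧ (1 - p) * Δ p * (1 - p) = 0 := by
  have key : ∀ q : A, (∀ d : A, d = d * p + p * d → q * d * q = 0) → q * Δ p * q = 0 := by
    intro q hq
    apply NormedSpace.eq_zero_of_forall_dual_eq_zero ℂ
    intro φ
    set L : A →L[ℂ] A :=
      ((ContinuousLinearMap.mul ℂ A).flip q).comp (ContinuousLinearMap.mul ℂ A q)
    have hL : ∀ x, L x = q * x * q := fun x => rfl
    obtain ⟨D, hD, hφ, -⟩ := hΔ p p (φ.comp L)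
    have hleib : D p = D p * p + p * D p := by
      conv_lhs => rw [← hp_idem]
      exact hD p p
    have : q * D p * q = 0 := hq _ hleib
    have hφ' : φ (q * Δ p * q) = φ (q * D p * q) := hφ
    rw [hφ', this, map_zero]
  constructor
  · exact key p fun d hd => (sandwich_aux hp_idem hd).1
  · exact key (1 - p) fun d hd => (sandwich_aux hp_idem hd).2
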